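/- arXiv:1508.05143 — 3 statements merged into one kernel-verified Lean document; each statement's English description precedes it below -/
import Mathlib

section
/- Given an m×(m−1) matrix of positive real numbers, there exists a row index i such that for every column j, the entry a(i,j) is at most the sum of all other entries in column j (i.e., a(i,j) ≤ Σ_{k≠i} a(k,j)). -/
/-- Given an m×(m−1) matrix of positive reals, there exists a row `i` such that
every entry `a i j` is at most the sum of the other entries in column `j`. -/
theorem row_selection_lemma (m : ℕ) (hm : 1 ≤ m) (a : Fin m → Fin (m - 1) → ℝ)
    (hpos : ∀ i j, 0 < a i j) :
    ∃ i : Fin m, ∀ j : Fin (m - 1),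
      a i j ≤ ∑ k ∈ Finset.univ.erase i, a k j := by
  by_contra h
  push_neg at h
  choose f hf using h
  have key : ∀ i i' : Fin m, i ≠ i' → f i ≠ f i' → True := fun _ _ _ _ => trivial
  have hlt : ∀ (i i' : Fin m), i' ≠ i → a i' (f i) < a i (f i) := by
    intro i i' hne
    calc a i' (f i) ≤ ∑ k ∈ Finset.univ.erase i, a k (f i) := by
          apply Finset.single_le_sum (f := fun k => a k (f i))
          · intro k _; exact (hpos k (f i)).le
          · simp [Finset.mem_erase, hne]
      _ < a i (f i) := hf i
  have finj : Function.Injective f := by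
    intro i i' hff
    by_contra hne
    have h1 := hlt i i' (Ne.symm hne)
    have h2 := hlt i' i hne
    rw [hff] at h1
    exact absurd (h1.trans h2) (lt_irrefl _)
  have := Fintype.card_le_of_injective f finj
  simp only [Fintype.card_fin] at this
  omega
end

section
/- Sequential picking after an equal cut is envy-free under domination: suppose agent 4 cuts residue R into four pieces P₁,…,P₄ of equal value under V₄, agents 1, 2, 3 pick their most preferred remaining piece in order 1, 2, 3, agent 4 gets the last piece, agent 2 dominates agent 1, and agent 3 dominates agents 1 and 2 (in the prior partial allocation). Then adding these pieces to the prior envy-free partial allocation preserves envy-freeness. -/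
/-- Sequential picking after an equal cut preserves envy-freeness under the
domination assumptions: agent 4 (index 3) cuts the residue R into four equal
pieces, agents 1,2,3 (indices 0,1,2) pick in order, agent 2 dominates agent 1,
and agent 3 dominates agents 1 and 2. -/
theorem sequential_pick_envy_free (V : Fin 4 → Set ℝ → ℝ)
    (hnn : ∀ i (X : Set ℝ), 0 ≤ V i X)
    (hadd : ∀ i (X Y : Set ℝ), Disjoint X Y → V i (X ∪ Y) = V i X + V i Y)
    (A : Fin 4 → Set ℝ) (R : Set ℝ)
    (hAdisj : ∀ i j, i ≠ j → Disjoint (A i) (A j))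
    (hRdisj : ∀ i, Disjoint (A i) R)
    (hef : ∀ i j, V i (A i) ≥ V i (A j))
    (hdom21 : V 1 (A 1) ≥ V 1 (A 0) + V 1 R)
    (hdom31 : V 2 (A 2) ≥ V 2 (A 0) + V 2 R)
    (hdom32 : V 2 (A 2) ≥ V 2 (A 1) + V 2 R)
    (P : Fin 4 → Set ℝ)
    (hPdisj : ∀ k l, k ≠ l → Disjoint (P k) (P l))
    (hPunion : (⋃ k, P k) = R)
    (hPsub : ∀ k, P k ⊆ R)
    (hequal : ∀ k, V 3 (P k) = V 3 R / 4)
    (e : Equiv.Perm (Fin 4))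
    (hpick1 : ∀ k, V 0 (P (e 0)) ≥ V 0 (P k))
    (hpick2 : ∀ k, k ≠ e 0 → V 1 (P (e 1)) ≥ V 1 (P k))
    (hpick3 : ∀ k, k ≠ e 0 → k ≠ e 1 → V 2 (P (e 2)) ≥ V 2 (P k)) :
    ∀ i j, V i (A i ∪ P (e i)) ≥ V i (A j ∪ P (e j)) := by

  have hPR : ∀ i k, V i (P k) ≤ V i R := by
    intro i k
    have hu : P k ∪ (R \ P k) = R := Set.union_diff_cancel (hPsub k)
    have := hadd i (P k) (R \ P k) disjoint_sdiff_self_right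
    rw [hu] at this
    have := hnn i (R \ P k)
    linarith
  have hval : ∀ i j k, V i (A j ∪ P k) = V i (A j) + V i (P k) :=
    fun i j k => hadd i _ _ ((hRdisj j).mono_right (hPsub k))
  intro i j
  rw [hval, hval]
  fin_cases i
  · show V 0 (A 0) + V 0 (P (e 0)) ≥ V 0 (A j) + V 0 (P (e j))
    have := hef 0 j
    have := hpick1 (e j)
    linarith
  · show V 1 (A 1) + V 1 (P (e 1)) ≥ V 1 (A j) + V 1 (P (e j))
    rcases eq_or_ne (e j) (e 0) with h | h
    · have hj : j = 0 := e.injective h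
      subst hj
      have h1 := hPR 1 (e 0)
      have h2 := hnn 1 (P (e 1))
      rw [h]
      linarith
    · have := hef 1 j
      have := hpick2 (e j) h
      linarith
  · show V 2 (A 2) + V 2 (P (e 2)) ≥ V 2 (A j) + V 2 (P (e j))
    rcases eq_or_ne (e j) (e 0) with h | h
    · have hj : j = 0 := e.injective h
      subst hj
      have h1 := hPR 2 (e 0)
      have h2 := hnn 2 (P (e 2))
      rw [h]
      linarith
    · rcases eq_or_ne (e j) (e 1) with h' | h'
      · have hj : j = 1 := e.injective h'
        subst hj
        have h1 := hPR 2 (e 1)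
        have h2 := hnn 2 (P (e 2))
        rw [h']
        linarith
      · have := hef 2 j
        have := hpick3 (e j) h h'
        linarith
  · show V 3 (A 3) + V 3 (P (e 3)) ≥ V 3 (A j) + V 3 (P (e j))
    have := hef 3 j
    have h1 := hequal (e 3)
    have h2 := hequal (e j)
    linarith
end

section
/- If agents 1 and 2 both dominate agents 3 and 4 in a partial envy-free allocation with residue R, and agents 3 and 4 divide R by Divide and Choose (3 cuts R into R₃, R₄ with V₃(R₃) = V₃(R₄), and 4 takes the piece he values more), then the resulting complete allocation is envy-free. -/
set_option maxHeartbeats 1000000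


/-- If agents 1 and 2 (indices 0,1) dominate agents 3 and 4 (indices 2,3),
and agents 3 and 4 divide the residue by Divide and Choose, the resulting
complete allocation is envy-free. -/
theorem divide_and_choose_residue_envy_free (V : Fin 4 → Set ℝ → ℝ)
    (hnn : ∀ i (X : Set ℝ), 0 ≤ V i X)
    (hadd : ∀ i (X Y : Set ℝ), Disjoint X Y → V i (X ∪ Y) = V i X + V i Y)
    (A : Fin 4 → Set ℝ) (R R₃ R₄ Rx Ry : Set ℝ)
    (hRdisj : ∀ i, Disjoint (A i) R)
    (hef : ∀ i j, V i (A i) ≥ V i (A j))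
    (hdom : ∀ i : Fin 4, i = 0 ∨ i = 1 → ∀ j : Fin 4, j = 2 ∨ j = 3 →
      V i (A i) ≥ V i (A j) + V i R)
    (hsplit : Disjoint R₃ R₄) (hsplitU : R₃ ∪ R₄ = R)
    (hcutEq : V 2 R₃ = V 2 R₄)
    (hxy : (Rx = R₃ ∧ Ry = R₄) ∨ (Rx = R₄ ∧ Ry = R₃))
    (hchoose : V 3 Ry ≥ V 3 Rx) :
    ∀ i j,
      V i (Function.update (Function.update A 2 (A 2 ∪ Rx)) 3 (A 3 ∪ Ry) i) ≥
      V i (Function.update (Function.update A 2 (A 2 ∪ Rx)) 3 (A 3 ∪ Ry) j) := by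
  have hxR : Rx ⊆ R := by
    rcases hxy with ⟨h, _⟩ | ⟨h, _⟩ <;> subst h <;> rw [← hsplitU] <;>
      [exact Set.subset_union_left; exact Set.subset_union_right]
  have hyR : Ry ⊆ R := by
    rcases hxy with ⟨_, h⟩ | ⟨_, h⟩ <;> subst h <;> rw [← hsplitU] <;>
      [exact Set.subset_union_right; exact Set.subset_union_left]
  have hVR : ∀ i, V i R = V i R₃ + V i R₄ := fun i => by
    rw [← hsplitU, hadd i _ _ hsplit]
  have key : ∀ i (X : Set ℝ), X = R₃ ∨ X = R₄ → V i X ≤ V i R := by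
    intro i X hX
    rcases hX with h | h <;> rw [h, hVR i] <;> nlinarith [hnn i R₃, hnn i R₄]
  have hxle : ∀ i, V i Rx ≤ V i R := fun i =>
    key i Rx (by rcases hxy with ⟨h, _⟩ | ⟨h, _⟩; exacts [Or.inl h, Or.inr h])
  have hyle : ∀ i, V i Ry ≤ V i R := fun i =>
    key i Ry (by rcases hxy with ⟨_, h⟩ | ⟨_, h⟩; exacts [Or.inr h, Or.inl h])
  have hV2 : V 2 Rx = V 2 Ry := by
    rcases hxy with ⟨h1, h2⟩ | ⟨h1, h2⟩ <;> subst h1 <;> subst h2 <;> simp [hcutEq]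
  have hAx : ∀ i j, V i (A j ∪ Rx) = V i (A j) + V i Rx := fun i j =>
    hadd i _ _ ((hRdisj j).mono_right hxR)
  have hAy : ∀ i j, V i (A j ∪ Ry) = V i (A j) + V i Ry := fun i j =>
    hadd i _ _ ((hRdisj j).mono_right hyR)
  intro i j
  fin_cases i <;> fin_cases j <;>
    simp only [Function.update_apply, ge_iff_le, Fin.ext_iff,
      show ((3:Fin 4):ℕ) = 3 from rfl, show ((2:Fin 4):ℕ) = 2 from rfl,
      show (⟨0, by omega⟩ : Fin 4) = 0 from rfl, show (⟨1, by omega⟩ : Fin 4) = 1 from rfl,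
      show (⟨2, by omega⟩ : Fin 4) = 2 from rfl, show (⟨3, by omega⟩ : Fin 4) = 3 from rfl] <;>
    (try norm_num) <;>
    first
    | exact le_refl _
    | (linarith [hef 0 1, hef 1 0, hef 0 2, hef 0 3, hef 1 2, hef 1 3, hef 2 0, hef 2 1, hef 2 3,
            hef 3 0, hef 3 1, hef 3 2,
            hdom 0 (Or.inl rfl) 2 (Or.inl rfl), hdom 0 (Or.inl rfl) 3 (Or.inr rfl),
            hdom 1 (Or.inr rfl) 2 (Or.inl rfl), hdom 1 (Or.inr rfl) 3 (Or.inr rfl),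
            hxle 0, hxle 1, hyle 0, hyle 1, hnn 2 Rx, hnn 2 Ry, hnn 3 Rx, hnn 3 Ry,
            hAx 0 2, hAy 0 3, hAx 1 2, hAy 1 3, hAx 2 2, hAy 2 3, hAx 3 2, hAy 3 3, hV2, hchoose,
            hnn 0 Rx, hnn 0 Ry, hnn 1 Rx, hnn 1 Ry])
end
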